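/- Let N ≥ 2 and let W = { θ ∈ ℝ^N : θ₁ = 0 and 0 < θ₂ < θ₃ < ⋯ < θ_N < 2π }. Then V attains a global minimum on W: there exists θ* ∈ W such that V(θ*) ≤ V(θ) for all θ ∈ W. -/
import Mathlib


open Real Finset

/-- The limit potential of the (1+N)-vortex problem:
`V(θ) = -∑_{i<j} (cos(θᵢ-θⱼ) + (1/2)·log(2 - 2cos(θᵢ-θⱼ)))`. -/
noncomputable def vortexPotential (N : ℕ) (θ : Fin N → ℝ) : ℝ :=
  - ∑ i : Fin N, ∑ j : Fin N,
      if i < j then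
        Real.cos (θ i - θ j) + (1 / 2) * Real.log (2 - 2 * Real.cos (θ i - θ j))
      else 0

namespace VortexAux

noncomputable def g (x : ℝ) : ℝ := Real.cos x + (1 / 2) * Real.log (2 - 2 * Real.cos x)

def pairs (N : ℕ) : Finset (Fin N × Fin N) := Finset.univ.filter fun p => p.1 < p.2

lemma potential_eq (N : ℕ) (θ : Fin N → ℝ) :
    vortexPotential N θ = - ∑ p ∈ pairs N, g (θ p.1 - θ p.2) := by
  unfold vortexPotential pairs g
  rw [Finset.sum_filter, ← Finset.sum_product']
  simp [Finset.sum_product]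

lemma g_le (x : ℝ) : g x ≤ 1 + (1 / 2) * Real.log 4 := by
  unfold g
  have h1 : Real.cos x ≤ 1 := Real.cos_le_one x
  have h2 : -1 ≤ Real.cos x := Real.neg_one_le_cos x
  have h3 : Real.log (2 - 2 * Real.cos x) ≤ Real.log 4 := by
    rcases eq_or_lt_of_le (by linarith : (0:ℝ) ≤ 2 - 2 * Real.cos x) with h | h
    · rw [← h]; simpa using Real.log_nonneg (by norm_num)
    · exact Real.log_le_log h (by linarith)
  nlinarith [h3]

lemma m_nonneg : (0:ℝ) ≤ 1 + (1 / 2) * Real.log 4 := by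
  have := Real.log_nonneg (show (1:ℝ) ≤ 4 by norm_num); linarith

lemma cos_lt_one' {x : ℝ} (h1 : 0 < x) (h2 : x < 2 * π) : Real.cos x < 1 := by
  rcases lt_or_eq_of_le (Real.cos_le_one x) with h | h
  · exact h
  · exfalso
    have := (Real.cos_eq_one_iff_of_lt_of_lt (by linarith [Real.pi_pos]) h2).mp h
    linarith

lemma cos_pair_lt_one {N : ℕ} {θ : Fin N → ℝ} (hm : StrictMono θ)
    (hnn : ∀ i, 0 ≤ θ i) (hub : ∀ i, θ i < 2 * π) {i j : Fin N} (hij : i < j) :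
    Real.cos (θ i - θ j) < 1 := by
  have h1 : θ i < θ j := hm hij
  have h2 : Real.cos (θ i - θ j) = Real.cos (θ j - θ i) := by
    rw [← Real.cos_neg]; ring_nf
  rw [h2]
  exact cos_lt_one' (by linarith) (by have := hnn i; have := hub j; linarith)

lemma contOn {N : ℕ} {s : Set (Fin N → ℝ)}
    (hs : ∀ θ ∈ s, ∀ p ∈ pairs N, (2 : ℝ) - 2 * Real.cos (θ p.1 - θ p.2) ≠ 0) :
    ContinuousOn (vortexPotential N) s := by
  have h : ContinuousOn (fun θ : Fin N → ℝ => ∑ p ∈ pairs N, g (θ p.1 - θ p.2)) s := by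
    apply continuousOn_finset_sum
    intro p hp
    have hc : Continuous fun θ : Fin N → ℝ => θ p.1 - θ p.2 :=
      (continuous_apply p.1).sub (continuous_apply p.2)
    have hcos : Continuous fun θ : Fin N → ℝ => Real.cos (θ p.1 - θ p.2) :=
      Real.continuous_cos.comp hc
    unfold g
    apply ContinuousOn.add hcos.continuousOn
    apply ContinuousOn.mul continuousOn_const
    exact ContinuousOn.log
      ((continuous_const.sub (continuous_const.mul hcos)).continuousOn)
      (fun θ hθ => hs θ hθ p hp)
  have : vortexPotential N = fun θ => - ∑ p ∈ pairs N, g (θ p.1 - θ p.2) := by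
    funext θ; exact potential_eq N θ
  rw [this]
  exact h.neg

end VortexAux

open VortexAux in
set_option maxHeartbeats 2000000 in
/-- For `N ≥ 2`, the potential `V` attains a global minimum on the wedge
`W = {θ : θ₁ = 0, 0 < θ₂ < ⋯ < θ_N < 2π}` (with indices starting at `1`): there is a
`θ* ∈ W` with `V(θ*) ≤ V(θ)` for all `θ ∈ W`. -/
theorem vortexPotential_attains_min_on_wedge (N : ℕ) (hN : 2 ≤ N)
    (W : Set (Fin N → ℝ))
    (hW : W = {θ : Fin N → ℝ |
      θ ⟨0, by omega⟩ = 0 ∧ StrictMono θ ∧ ∀ i : Fin N, θ i < 2 * π}) :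
    ∃ θs ∈ W, ∀ θ ∈ W, vortexPotential N θs ≤ vortexPotential N θ := by
  have hπ := Real.pi_pos
  set i0 : Fin N := ⟨0, by omega⟩ with hi0
  set i1 : Fin N := ⟨1, by omega⟩ with hi1
  set P : Finset (Fin N × Fin N) := pairs N with hPdef
  have hi0le : ∀ i : Fin N, i0 ≤ i := fun i => by
    rw [Fin.le_def]; exact Nat.zero_le _
  have hPne : P.Nonempty := ⟨(i0, i1), by
    simp only [hPdef, pairs, Finset.mem_filter, Finset.mem_univ, true_and]
    rw [Fin.lt_def]; exact Nat.zero_lt_one⟩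
  set m : ℝ := 1 + (1 / 2) * Real.log 4 with hm
  -- base point
  set θb : Fin N → ℝ := fun i => 2 * π * i.val / N with hθb
  have hNpos : (0:ℝ) < N := by positivity
  have hθbmono : StrictMono θb := by
    intro i j hij
    have hij' : (i.val : ℝ) < j.val := by exact_mod_cast hij
    show 2 * π * i.val / N < 2 * π * j.val / N
    rw [div_lt_div_iff₀ hNpos hNpos]
    nlinarith [mul_pos hπ hNpos, hij']
  have hpmem : ∀ {i j : Fin N}, i < j → (i, j) ∈ P := by
    intro i j h
    simp only [hPdef, pairs, Finset.mem_filter, Finset.mem_univ, true_and]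
    exact h
  have hθb0 : θb i0 = 0 := by simp [hθb, hi0]
  have hθbub : ∀ i : Fin N, θb i < 2 * π := by
    intro i
    show 2 * π * i.val / N < 2 * π
    rw [div_lt_iff₀ hNpos]
    have : (i.val : ℝ) < N := by exact_mod_cast i.isLt
    nlinarith
  have hθbnn : ∀ i : Fin N, 0 ≤ θb i := by
    intro i; show 0 ≤ 2 * π * i.val / N; positivity
  set C : ℝ := vortexPotential N θb with hC
  set B : ℝ := -C - (P.card : ℝ) * m with hB
  set ε₂ : ℝ := Real.exp (2 * B - 2) / 2 with hε₂
  have hε₂pos : 0 < ε₂ := by positivity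
  obtain ⟨q, hqP, hqmax⟩ := P.exists_max_image (fun p => Real.cos (θb p.1 - θb p.2)) hPne
  set c₁ : ℝ := Real.cos (θb q.1 - θb q.2) with hc₁def
  have hc₁ : c₁ < 1 := by
    have hqlt : q.1 < q.2 := by
      simpa only [hPdef, pairs, Finset.mem_filter, Finset.mem_univ, true_and] using hqP
    exact cos_pair_lt_one hθbmono hθbnn hθbub hqlt
  set ε : ℝ := min (1 - c₁) ε₂ with hε
  have hεpos : 0 < ε := lt_min (by linarith) hε₂pos
  set K : Set (Fin N → ℝ) := {θ | θ i0 = 0 ∧ (∀ i j : Fin N, i ≤ j → θ i ≤ θ j) ∧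
      (∀ i, θ i ≤ 2 * π) ∧ ∀ p ∈ P, Real.cos (θ p.1 - θ p.2) ≤ 1 - ε} with hK
  have hKW : ∀ θ ∈ K, θ ∈ W := by
    intro θ hθ
    obtain ⟨h0, hmono, hub, hcos⟩ := hθ
    have hne : ∀ i j : Fin N, i < j → θ i ≠ θ j := by
      intro i j hij heq
      have h := hcos (i, j) (hpmem hij)
      rw [heq, sub_self, Real.cos_zero] at h
      linarith
    rw [hW]
    refine ⟨h0, ?_, ?_⟩
    · intro i j hij
      exact lt_of_le_of_ne (hmono i j hij.le) (hne i j hij)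
    · intro i
      rcases eq_or_lt_of_le (hi0le i) with h | h
      · rw [← h, h0]; positivity
      · have hp := hcos (i0, i) (hpmem h)
        rcases eq_or_lt_of_le (hub i) with h2 | h2
        · exfalso
          rw [h0, h2, zero_sub, Real.cos_neg, Real.cos_two_pi] at hp
          linarith
        · exact h2
  have hθbK : θb ∈ K := by
    refine ⟨hθb0, fun i j hij => ?_, fun i => (hθbub i).le, fun p hp => ?_⟩
    · rcases eq_or_lt_of_le hij with h | h
      · rw [h]
      · exact (hθbmono h).le
    · have h1 : Real.cos (θb p.1 - θb p.2) ≤ c₁ := hqmax p hp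
      have h2 : ε ≤ 1 - c₁ := min_le_left _ _
      linarith
  have hsub : ∀ θ ∈ W, vortexPotential N θ ≤ C → θ ∈ K := by
    intro θ hθW hle
    rw [hW] at hθW
    obtain ⟨h0, hmono, hub⟩ := hθW
    have hnn : ∀ i, 0 ≤ θ i := fun i => by
      rw [← h0]; exact hmono.monotone (hi0le i)
    refine ⟨h0, fun i j hij => hmono.monotone hij, fun i => (hub i).le, ?_⟩
    intro p hp
    have hplt : p.1 < p.2 := by
      simpa only [hPdef, pairs, Finset.mem_filter, Finset.mem_univ, true_and] using hp
    have hS : -C ≤ ∑ q ∈ P, g (θ q.1 - θ q.2) := by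
      rw [potential_eq] at hle
      rw [hPdef]; linarith
    have herase : ∑ q ∈ P.erase p, g (θ q.1 - θ q.2) ≤ (P.card : ℝ) * m := by
      calc ∑ q ∈ P.erase p, g (θ q.1 - θ q.2)
          ≤ (P.erase p).card • m :=
            Finset.sum_le_card_nsmul _ _ _ (fun q _ => g_le _)
        _ = ((P.erase p).card : ℝ) * m := nsmul_eq_mul _ _
        _ ≤ (P.card : ℝ) * m := by
            apply mul_le_mul_of_nonneg_right _ m_nonneg
            exact_mod_cast Finset.card_le_card (Finset.erase_subset _ _)
    have hsplit : g (θ p.1 - θ p.2) + ∑ q ∈ P.erase p, g (θ q.1 - θ q.2)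
        = ∑ q ∈ P, g (θ q.1 - θ q.2) := Finset.add_sum_erase P (fun q => g (θ q.1 - θ q.2)) hp
    have hgB : B ≤ g (θ p.1 - θ p.2) := by rw [hB]; linarith
    have hcoslt : Real.cos (θ p.1 - θ p.2) < 1 := cos_pair_lt_one hmono hnn hub hplt
    have ht : 0 < 2 - 2 * Real.cos (θ p.1 - θ p.2) := by linarith
    have hlog : 2 * B - 2 ≤ Real.log (2 - 2 * Real.cos (θ p.1 - θ p.2)) := by
      have hc1 : Real.cos (θ p.1 - θ p.2) ≤ 1 := hcoslt.le
      unfold g at hgB; linarith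
    have hexp : Real.exp (2 * B - 2) ≤ 2 - 2 * Real.cos (θ p.1 - θ p.2) := by
      calc Real.exp (2 * B - 2)
          ≤ Real.exp (Real.log (2 - 2 * Real.cos (θ p.1 - θ p.2))) :=
            Real.exp_le_exp.mpr hlog
        _ = _ := Real.exp_log ht
    have h1 : Real.cos (θ p.1 - θ p.2) ≤ 1 - ε₂ := by rw [hε₂]; linarith
    have h2 : ε ≤ ε₂ := min_le_right _ _
    linarith
  have hKcl : IsClosed K := by
    rw [hK]
    have h1 : IsClosed {θ : Fin N → ℝ | θ i0 = 0} :=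
      isClosed_eq (continuous_apply i0) continuous_const
    have h2 : IsClosed {θ : Fin N → ℝ | ∀ i j : Fin N, i ≤ j → θ i ≤ θ j} := by
      rw [Set.setOf_forall]
      refine isClosed_iInter fun i => ?_
      rw [Set.setOf_forall]
      refine isClosed_iInter fun j => ?_
      by_cases h : i ≤ j
      · simp only [h, true_implies]
        exact isClosed_le (continuous_apply i) (continuous_apply j)
      · simp only [h, false_implies, Set.setOf_true]
        exact isClosed_univ
    have h3 : IsClosed {θ : Fin N → ℝ | ∀ i, θ i ≤ 2 * π} := by
      rw [Set.setOf_forall]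
      exact isClosed_iInter fun i => isClosed_le (continuous_apply i) continuous_const
    have h4 : IsClosed {θ : Fin N → ℝ | ∀ p ∈ P, Real.cos (θ p.1 - θ p.2) ≤ 1 - ε} := by
      rw [Set.setOf_forall]
      refine isClosed_iInter fun p => ?_
      by_cases h : p ∈ P
      · simp only [h, true_implies]
        exact isClosed_le
          (Real.continuous_cos.comp ((continuous_apply p.1).sub (continuous_apply p.2)))
          continuous_const
      · simp only [h, false_implies, Set.setOf_true]
        exact isClosed_univ
    simp only [Set.setOf_and]
    exact h1.inter (h2.inter (h3.inter h4))
  have hKsub : K ⊆ Set.pi Set.univ (fun _ : Fin N => Set.Icc (0:ℝ) (2 * π)) := by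
    intro θ hθ i _
    obtain ⟨h0, hmono, hub, -⟩ := hθ
    exact ⟨by rw [← h0]; exact hmono _ _ (hi0le i), hub i⟩
  have hKcpt : IsCompact K :=
    IsCompact.of_isClosed_subset (isCompact_univ_pi fun _ => isCompact_Icc) hKcl hKsub
  have hcont : ContinuousOn (vortexPotential N) K := by
    apply contOn
    intro θ hθ p hp
    have hcosle : Real.cos (θ p.1 - θ p.2) ≤ 1 - ε := hθ.2.2.2 p (hPdef ▸ hp)
    intro h
    linarith [hεpos]
  obtain ⟨θs, hθsK, hmin⟩ := hKcpt.exists_isMinOn ⟨θb, hθbK⟩ hcont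
  refine ⟨θs, hKW θs hθsK, ?_⟩
  intro θ hθW
  by_cases h : vortexPotential N θ ≤ C
  · exact isMinOn_iff.mp hmin θ (hsub θ hθW h)
  · have h1 : vortexPotential N θs ≤ C := isMinOn_iff.mp hmin θb hθbK
    linarith [not_le.mp h]
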